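/- The density matrix of a cris-cross graph is separable: for i₁ ≠ i₂, the graph C on vertices {(i₁,1),(i₁,2),(i₂,1),(i₂,2)} with edges {(i₁,1),(i₂,2)} and {(i₂,1),(i₁,2)} has ρ(C) separable in C^p ⊗ C^2. -/

import Mathlib

open Matrix Kronecker
open scoped BigOperators Classical ComplexOrder

noncomputable section

def grho {V : Type*} [Fintype V] [DecidableEq V] (G : SimpleGraph V) : Matrix V V ℂ :=
  ((2 * G.edgeFinset.card : ℂ))⁻¹ • G.lapMatrix ℂ

def degM {V : Type*} [Fintype V] [DecidableEq V] (G : SimpleGraph V) : Matrix V V ℂ :=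
  Matrix.diagonal fun v => (G.degree v : ℂ)

def ptB {p q : ℕ} {α : Type*} (A : Matrix (Fin p × Fin q) (Fin p × Fin q) α) :
    Matrix (Fin p × Fin q) (Fin p × Fin q) α :=
  fun x y => A (x.1, y.2) (y.1, x.2)

def gptB {p q : ℕ} (G : SimpleGraph (Fin p × Fin q)) : SimpleGraph (Fin p × Fin q) where
  Adj x y := G.Adj (x.1, y.2) (y.1, x.2)
  symm := ⟨fun x y h => G.adj_symm h⟩
  loopless := ⟨fun x h => G.irrefl h⟩

def IsDensityMatrix {n : Type*} [Fintype n] [DecidableEq n] (A : Matrix n n ℂ) : Prop :=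
  A.PosSemidef ∧ A.trace = 1

def Separable {p q : ℕ} (ρ : Matrix (Fin p × Fin q) (Fin p × Fin q) ℂ) : Prop :=
  ∃ (m : ℕ) (w : Fin m → ℝ) (σ : Fin m → Matrix (Fin p) (Fin p) ℂ)
    (τ : Fin m → Matrix (Fin q) (Fin q) ℂ),
    (∀ k, 0 ≤ w k) ∧ (∑ k, w k = 1) ∧
    (∀ k, IsDensityMatrix (σ k)) ∧ (∀ k, IsDensityMatrix (τ k)) ∧
    ρ = ∑ k, (w k : ℂ) • (σ k ⊗ₖ τ k)

def proj {n : Type*} (ψ : n → ℂ) : Matrix n n ℂ := vecMulVec ψ (star ψ)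

def crisCross (p : ℕ) (i₁ i₂ : Fin p) : SimpleGraph (Fin p × Fin 2) where
  Adj x y := (x = (i₁, 0) ∧ y = (i₂, 1)) ∨ (x = (i₂, 1) ∧ y = (i₁, 0)) ∨
    (x = (i₂, 0) ∧ y = (i₁, 1)) ∨ (x = (i₁, 1) ∧ y = (i₂, 0))
  symm := ⟨by tauto⟩
  loopless := ⟨by
    rintro x (⟨h1, h2⟩ | ⟨h1, h2⟩ | ⟨h1, h2⟩ | ⟨h1, h2⟩) <;> subst h1 <;>
      simp [Prod.ext_iff] at h2⟩

/-!
The Laplacian of a graph is the sum, over its edges `s(x, y)`, of the projectors onto `δ_x - δ_y`.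
For the cris-cross graph these are `a = δ(i₁,0) - δ(i₂,1)` and `b = δ(i₂,0) - δ(i₁,1)`, and the
parallelogram identity `|a+b⟩⟨a+b| + |a-b⟩⟨a-b| = 2 (|a⟩⟨a| + |b⟩⟨b|)` trades them for
`a + b = (δ i₁ + δ i₂) ⊗ (δ 0 - δ 1)` and `a - b = (δ i₁ - δ i₂) ⊗ (δ 0 + δ 1)`, which are product
vectors. So `ρ` is the equal mixture of two pure product states.
-/

section Projector

variable {n : Type*}

lemma proj_neg (ψ : n → ℂ) : proj (-ψ) = proj ψ := by
  simp [proj, neg_vecMulVec, vecMulVec_neg]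

lemma proj_add_add_proj_sub (φ ψ : n → ℂ) :
    proj (φ + ψ) + proj (φ - ψ) = (2 : ℂ) • (proj φ + proj ψ) := by
  ext i j
  simp only [proj, Matrix.add_apply, Matrix.smul_apply, vecMulVec_apply, Pi.add_apply, Pi.sub_apply,
    Pi.star_apply, star_add, star_sub, smul_eq_mul]
  ring

lemma posSemidef_proj [Fintype n] (ψ : n → ℂ) : (proj ψ).PosSemidef := by
  rw [proj, vecMulVec_eq Unit, ← conjTranspose_replicateCol]
  exact posSemidef_self_mul_conjTranspose _

lemma trace_proj [Fintype n] (ψ : n → ℂ) :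
    (proj ψ).trace = ∑ i, ψ i * star (ψ i) := rfl

lemma trace_proj_single_add_single [Fintype n] [DecidableEq n] {a b : n} (hab : a ≠ b)
    {s : ℂ} (hs : s * star s = 1) : (proj (Pi.single a 1 + Pi.single b s)).trace = 2 := by
  simp [trace_proj, Pi.single_apply, add_mul, mul_add, Finset.sum_add_distrib, hab,
    Finset.sum_ite_eq', show s * starRingEnd ℂ s = 1 from hs]
  norm_num

lemma isDensityMatrix_smul_proj [Fintype n] [DecidableEq n] {ψ : n → ℂ} {r : ℝ}
    (hr : 0 ≤ r) (h : (r : ℂ) * (proj ψ).trace = 1) : IsDensityMatrix ((r : ℂ) • proj ψ) :=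
  ⟨(posSemidef_proj ψ).smul (Complex.zero_le_real.mpr hr), by rwa [trace_smul, smul_eq_mul]⟩

lemma isDensityMatrix_half_proj_single_add_single [Fintype n] [DecidableEq n]
    {a b : n} (hab : a ≠ b) {s : ℂ} (hs : s * star s = 1) :
    IsDensityMatrix (((1 / 2 : ℝ) : ℂ) • proj (Pi.single a 1 + Pi.single b s)) :=
  isDensityMatrix_smul_proj (by norm_num) (by rw [trace_proj_single_add_single hab hs]; norm_num)

end Projector

lemma proj_kronecker {m n : Type*} (φ : m → ℂ) (ψ : n → ℂ) :
    proj (fun x : m × n => φ x.1 * ψ x.2) = proj φ ⊗ₖ proj ψ := by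
  ext ⟨i, a⟩ ⟨j, b⟩
  simp only [proj, kroneckerMap_apply, vecMulVec_apply, Pi.star_apply, star_mul']
  ring

lemma separable_smul_kronecker_add_smul_kronecker {p q : ℕ} {σ₁ σ₂ : Matrix (Fin p) (Fin p) ℂ}
    {τ₁ τ₂ : Matrix (Fin q) (Fin q) ℂ} (hσ₁ : IsDensityMatrix σ₁) (hσ₂ : IsDensityMatrix σ₂)
    (hτ₁ : IsDensityMatrix τ₁) (hτ₂ : IsDensityMatrix τ₂) {w : ℝ} (hw₀ : 0 ≤ w) (hw₁ : w ≤ 1) :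
    Separable ((w : ℂ) • (σ₁ ⊗ₖ τ₁) + ((1 - w : ℝ) : ℂ) • (σ₂ ⊗ₖ τ₂)) :=
  ⟨2, ![w, 1 - w], ![σ₁, σ₂], ![τ₁, τ₂], Fin.forall_fin_two.mpr ⟨hw₀, sub_nonneg.mpr hw₁⟩,
    by simp, Fin.forall_fin_two.mpr ⟨hσ₁, hσ₂⟩, Fin.forall_fin_two.mpr ⟨hτ₁, hτ₂⟩,
    by rw [Fin.sum_univ_two]; rfl⟩

section EdgeProjector

variable {V : Type*} [DecidableEq V]

def edgeProj : Sym2 V → Matrix V V ℂ :=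
  Sym2.lift ⟨fun x y => proj (Pi.single x 1 - Pi.single y 1), fun x y => by
    dsimp only
    rw [← neg_sub, proj_neg]⟩

@[simp]
lemma edgeProj_mk (x y : V) : edgeProj s(x, y) = proj (Pi.single x 1 - Pi.single y 1) := rfl

lemma edgeProj_apply {e : Sym2 V} (he : ¬e.IsDiag) (v w : V) :
    edgeProj e v w =
      if v = w then (if v ∈ e then 1 else 0) else (if e = s(v, w) then -1 else 0) := by
  induction e using Sym2.ind with
  | _ x y =>
    have hxy : x ≠ y := by simpa using he
    simp only [edgeProj_mk, proj, vecMulVec_apply, Pi.star_apply, Pi.sub_apply,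
      Pi.single_apply, Sym2.mem_iff, Sym2.eq_iff]
    split_ifs <;> simp_all [eq_comm]

end EdgeProjector

namespace SimpleGraph

variable {V : Type*} [Fintype V] [DecidableEq V]

lemma lapMatrix_eq_sum_edgeProj (G : SimpleGraph V) [DecidableRel G.Adj] :
    G.lapMatrix ℂ = ∑ e ∈ G.edgeFinset, edgeProj e := by
  ext v w
  rw [Matrix.sum_apply, Finset.sum_congr rfl fun e he =>
    edgeProj_apply (G.not_isDiag_of_mem_edgeSet (G.mem_edgeFinset.mp he)) v w]
  by_cases hvw : v = w
  · subst hvw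
    simp [lapMatrix, degMatrix, ← card_incidenceFinset_eq_degree, incidenceFinset_eq_filter,
      Finset.sum_boole]
  · simp only [lapMatrix, degMatrix, Matrix.sub_apply, diagonal_apply_ne _ hvw, adjMatrix_apply,
      hvw, if_false, Finset.sum_ite_eq', mem_edgeFinset, mem_edgeSet, zero_sub]
    split_ifs <;> simp

end SimpleGraph

section CrisCross

variable {p : ℕ} {i₁ i₂ : Fin p}

lemma crisCross_edgeFinset :
    (crisCross p i₁ i₂).edgeFinset = {s((i₁, 0), (i₂, 1)), s((i₂, 0), (i₁, 1))} := by
  ext e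
  induction e using Sym2.ind with
  | _ x y =>
    simp only [SimpleGraph.mem_edgeFinset, SimpleGraph.mem_edgeSet]
    simp only [crisCross, Finset.mem_insert, Finset.mem_singleton, Sym2.eq_iff]
    tauto

lemma card_edgeFinset_crisCross (h : i₁ ≠ i₂) : (crisCross p i₁ i₂).edgeFinset.card = 2 := by
  rw [crisCross_edgeFinset, Finset.card_pair]
  simp [h]

lemma lapMatrix_crisCross (h : i₁ ≠ i₂) :
    (crisCross p i₁ i₂).lapMatrix ℂ =
      proj (Pi.single (i₁, 0) 1 - Pi.single (i₂, 1) 1) +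
        proj (Pi.single (i₂, 0) 1 - Pi.single (i₁, 1) 1) := by
  rw [SimpleGraph.lapMatrix_eq_sum_edgeProj, crisCross_edgeFinset, Finset.sum_pair (by simp [h])]
  rfl

end CrisCross

lemma two_smul_lapMatrix_crisCross {p : ℕ} {i₁ i₂ : Fin p} (h : i₁ ≠ i₂) :
    (2 : ℂ) • (crisCross p i₁ i₂).lapMatrix ℂ =
      proj (Pi.single i₁ 1 + Pi.single i₂ 1) ⊗ₖ proj (Pi.single 0 1 + Pi.single 1 (-1)) +
        proj (Pi.single i₁ 1 + Pi.single i₂ (-1)) ⊗ₖ proj (Pi.single 0 1 + Pi.single 1 1) := by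
  rw [lapMatrix_crisCross h, ← proj_add_add_proj_sub, ← proj_kronecker, ← proj_kronecker]
  congr 2 <;> funext ⟨i, u⟩ <;> fin_cases u <;>
    by_cases h₁ : i = i₁ <;> by_cases h₂ : i = i₂ <;> simp_all

lemma grho_crisCross {p : ℕ} {i₁ i₂ : Fin p} (h : i₁ ≠ i₂) :
    grho (crisCross p i₁ i₂) =
      ((1 / 2 : ℝ) : ℂ) • ((((1 / 2 : ℝ) : ℂ) • proj (Pi.single i₁ 1 + Pi.single i₂ 1)) ⊗ₖ
          (((1 / 2 : ℝ) : ℂ) • proj (Pi.single 0 1 + Pi.single 1 (-1)))) +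
        ((1 - 1 / 2 : ℝ) : ℂ) • ((((1 / 2 : ℝ) : ℂ) • proj (Pi.single i₁ 1 + Pi.single i₂ (-1))) ⊗ₖ
          (((1 / 2 : ℝ) : ℂ) • proj (Pi.single 0 1 + Pi.single 1 1))) := by
  have hL := two_smul_lapMatrix_crisCross h
  rw [grho, card_edgeFinset_crisCross h]
  simp only [smul_kronecker, kronecker_smul, smul_smul]
  rw [show ((1 - 1 / 2 : ℝ) : ℂ) = ((1 / 2 : ℝ) : ℂ) by norm_num, ← smul_add, ← hL, smul_smul]
  norm_num

theorem stmt11 (p : ℕ) (i₁ i₂ : Fin p) (h : i₁ ≠ i₂) :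
    Separable (grho (crisCross p i₁ i₂)) := by
  rw [grho_crisCross h]
  exact separable_smul_kronecker_add_smul_kronecker
    (isDensityMatrix_half_proj_single_add_single h (by simp))
    (isDensityMatrix_half_proj_single_add_single h (by simp))
    (isDensityMatrix_half_proj_single_add_single zero_ne_one (by simp))
    (isDensityMatrix_half_proj_single_add_single zero_ne_one (by simp)) (by norm_num) (by norm_num)
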